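/- For a monic polynomial f of degree n over A, the natural map from the splitting algebra of f_{n-1}(t) = f(t)/(t - τ_n) over A[τ_n] = A[t]/(f) to A_f is an isomorphism of A-algebras. -/

import Mathlib

open MvPolynomial Polynomial

/-- The ideal `(s₁ - f₁, ..., sₙ - fₙ)` defining the splitting algebra, where
`fᵢ = (-1)^i · coeff f (n - i)` are the signed coefficients of `f`. -/
noncomputable def splittingIdeal (A : Type*) [CommRing A] (f : Polynomial A) (n : ℕ) :
    Ideal (MvPolynomial (Fin n) A) :=
  Ideal.span (Set.range fun i : Fin n =>
    esymm (Fin n) A ((i : ℕ) + 1) -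
      MvPolynomial.C ((-1 : A) ^ ((i : ℕ) + 1) * f.coeff (n - ((i : ℕ) + 1))))

/-- The splitting algebra `A_f = A[t₁,...,tₙ]/(s₁ - f₁, ..., sₙ - fₙ)`. -/
noncomputable def SplittingAlgebra (A : Type*) [CommRing A] (f : Polynomial A) (n : ℕ) :=
  MvPolynomial (Fin n) A ⧸ splittingIdeal A f n

noncomputable instance (A : Type*) [CommRing A] (f : Polynomial A) (n : ℕ) :
    CommRing (SplittingAlgebra A f n) := Ideal.Quotient.commRing _

noncomputable instance (R A : Type*) [CommSemiring R] [CommRing A] [Algebra R A]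
    (f : Polynomial A) (n : ℕ) : Algebra R (SplittingAlgebra A f n) :=
  Ideal.Quotient.algebra R

/-- The universal roots `τᵢ` of `f` in the splitting algebra. -/
noncomputable def univRoot (A : Type*) [CommRing A] (f : Polynomial A) (n : ℕ) (i : Fin n) :
    SplittingAlgebra A f n :=
  Ideal.Quotient.mk (splittingIdeal A f n) (MvPolynomial.X i)

/-- The action of a permutation `σ` on the splitting algebra, sending `τᵢ` to `τ_{σ⁻¹ i}`. -/
noncomputable def permHom (A : Type*) [CommRing A] (f : Polynomial A) (n : ℕ)
    (σ : Equiv.Perm (Fin n)) : SplittingAlgebra A f n →ₐ[A] SplittingAlgebra A f n :=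
  Ideal.Quotient.liftₐ (splittingIdeal A f n)
    ((Ideal.Quotient.mkₐ A (splittingIdeal A f n)).comp
      (rename (σ.symm : Fin n → Fin n)))
    (by
      intro a ha
      have h : splittingIdeal A f n ≤ RingHom.ker
          ((Ideal.Quotient.mkₐ A (splittingIdeal A f n)).comp
            (rename (σ.symm : Fin n → Fin n))) := by
        rw [splittingIdeal, Ideal.span_le]
        rintro _ ⟨i, rfl⟩
        have : (rename (σ.symm : Fin n → Fin n))
            (esymm (Fin n) A ((i : ℕ) + 1) -
              MvPolynomial.C ((-1 : A) ^ ((i : ℕ) + 1) * f.coeff (n - ((i : ℕ) + 1)))) =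
            esymm (Fin n) A ((i : ℕ) + 1) -
              MvPolynomial.C ((-1 : A) ^ ((i : ℕ) + 1) * f.coeff (n - ((i : ℕ) + 1))) := by
          rw [map_sub, rename_esymm, rename_C]
        simp only [SetLike.mem_coe, RingHom.mem_ker, AlgHom.coe_comp, Function.comp_apply, this]
        rw [Ideal.Quotient.mkₐ_eq_mk, Ideal.Quotient.eq_zero_iff_mem]
        exact Ideal.subset_span ⟨i, rfl⟩
      exact h ha)

/-! By Vieta, the relations `sᵢ = fᵢ` say exactly that `f = ∏ (t - τᵢ)`, so `A_f` is the universal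
`A`-algebra over which `f` splits into linear factors. Over any algebra `C`, such a splitting of
`f` into `n + 1` factors is the same as a root `y` of `f` (that is, a map `A[τₙ] → C`) together with
a splitting of `f(t)/(t - y)` into `n` factors. Hence both algebras have the same universal
property; concretely, the two maps it provides compose to the identity on generators. -/

namespace Polynomial

variable {R ι : Type*} [CommRing R] [Fintype ι]

lemma prod_X_sub_C_eq_multiset_prod (y : ι → R) :
    ∏ i, (X - C (y i)) = ((Finset.univ.val.map y).map fun t => X - C t).prod := by
  rw [Multiset.map_map, Finset.prod_eq_multiset_prod]
  rfl

lemma esymm_eq_of_prod_X_sub_C {y : ι → R} {p : R[X]} (h : ∏ i, (X - C (y i)) = p) {k : ℕ}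
    (hk : k ≤ Fintype.card ι) :
    (Finset.univ.val.map y).esymm k = (-1) ^ k * p.coeff (Fintype.card ι - k) := by
  have hcoeff := Multiset.prod_X_sub_C_coeff (Finset.univ.val.map y)
    (k := Fintype.card ι - k) (by simp)
  rw [← prod_X_sub_C_eq_multiset_prod, h, Multiset.card_map, Finset.card_val, Finset.card_univ,
    Nat.sub_sub_self hk] at hcoeff
  rw [hcoeff, ← mul_assoc, ← pow_add, Even.neg_one_pow ⟨k, rfl⟩, one_mul]

lemma prod_X_sub_C_eq_of_esymm {y : ι → R} {p : R[X]} (hp : p.natDegree ≤ Fintype.card ι)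
    (h : ∀ k ≤ Fintype.card ι,
      (Finset.univ.val.map y).esymm k = (-1) ^ k * p.coeff (Fintype.card ι - k)) :
    ∏ i, (X - C (y i)) = p := by
  nontriviality R
  ext j
  rcases le_or_gt j (Fintype.card ι) with hj | hj
  · rw [prod_X_sub_C_eq_multiset_prod, Multiset.prod_X_sub_C_coeff _ (by simpa using hj)]
    simp only [Multiset.card_map, Finset.card_val, Finset.card_univ]
    rw [h _ (Nat.sub_le _ _), ← mul_assoc, ← pow_add, Even.neg_one_pow ⟨_, rfl⟩, one_mul,
      Nat.sub_sub_self hj]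
  · rw [coeff_eq_zero_of_natDegree_lt (hp.trans_lt hj), coeff_eq_zero_of_natDegree_lt (by simpa)]

lemma prod_X_sub_C_castSucc_eq {n : ℕ} {y : Fin (n + 1) → R} {q : R[X]}
    (h : ∏ i, (X - C (y i)) = (X - C (y (Fin.last n))) * q) :
    ∏ i : Fin n, (X - C (y i.castSucc)) = q := by
  refine (monic_X_sub_C (y (Fin.last n))).isRegular.left ?_
  simpa only [Fin.prod_univ_castSucc, mul_comm] using h

lemma isRoot_of_prod_X_sub_C_eq {y : ι → R} {p : R[X]} (h : ∏ i, (X - C (y i)) = p) (j : ι) :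
    p.IsRoot (y j) :=
  dvd_iff_isRoot.1 (h ▸ Finset.dvd_prod_of_mem _ (Finset.mem_univ j))

section DivByMonic

variable {p : R[X]} {n : ℕ}

lemma natDegree_divByMonic_X_sub_C_le (hp : p.natDegree ≤ n + 1) (a : R) :
    (p /ₘ (X - C a)).natDegree ≤ n := by
  nontriviality R
  rw [natDegree_divByMonic _ (monic_X_sub_C a), natDegree_X_sub_C]
  omega

lemma coeff_divByMonic_X_sub_C_of_natDegree_le (hp : p.natDegree ≤ n + 1) (a : R) :
    (p /ₘ (X - C a)).coeff n = p.coeff (n + 1) := by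
  rw [coeff_divByMonic_X_sub_C_rec, coeff_eq_zero_of_natDegree_lt
    ((natDegree_divByMonic_X_sub_C_le hp a).trans_lt n.lt_succ_self), mul_zero, add_zero]

end DivByMonic

end Polynomial

namespace MvPolynomial

lemma eval₂Hom_esymm {R S σ : Type*} [CommSemiring R] [CommSemiring S] [Fintype σ]
    (φ : R →+* S) (y : σ → S) (k : ℕ) :
    eval₂Hom φ y (esymm σ R k) = (Finset.univ.val.map y).esymm k := by
  simp_rw [esymm, map_sum, map_prod, eval₂Hom_X', Finset.esymm_map_val]

end MvPolynomial

namespace SplittingAlgebra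

instance {R B : Type*} [CommSemiring R] [CommRing B] [Algebra R B] (g : B[X]) (m : ℕ) :
    IsScalarTower R B (SplittingAlgebra B g m) :=
  Ideal.Quotient.isScalarTower R B _

variable {A : Type*} [CommRing A] {f : A[X]}

section

variable {m : ℕ}

lemma algebraMap_eq_mk_C (a : A) :
    algebraMap A (SplittingAlgebra A f m) a = Ideal.Quotient.mk _ (MvPolynomial.C a) :=
  rfl

lemma aeval_univRoot (p : MvPolynomial (Fin m) A) :
    MvPolynomial.aeval (univRoot A f m) p = Ideal.Quotient.mk (splittingIdeal A f m) p := by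
  induction p using MvPolynomial.induction_on with
  | C a => exact MvPolynomial.aeval_C _ a
  | add p q hp hq => rw [map_add, hp, hq]; rfl
  | mul_X p i hp => rw [map_mul, map_mul, hp, MvPolynomial.aeval_X]; rfl

lemma esymm_univRoot {k : ℕ} (hk₀ : 1 ≤ k) (hk : k ≤ m) :
    (Finset.univ.val.map (univRoot A f m)).esymm k =
      algebraMap A (SplittingAlgebra A f m) ((-1) ^ k * f.coeff (m - k)) := by
  obtain ⟨i, rfl⟩ := Nat.exists_eq_add_of_le' hk₀
  rw [← aeval_esymm_eq_multiset_esymm (σ := Fin m) (R := A), aeval_univRoot, algebraMap_eq_mk_C]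
  exact (Ideal.Quotient.mk_eq_mk_iff_sub_mem _ _).2 (Ideal.subset_span ⟨⟨i, by omega⟩, rfl⟩)

/- Stated with `coeff m = 1` rather than `Monic` and `natDegree = m`, which fail for `divRoot f`
when `A` is the zero ring. -/
lemma prod_X_sub_C_univRoot (hdeg : f.natDegree ≤ m) (hlead : f.coeff m = 1) :
    ∏ i, (Polynomial.X - Polynomial.C (univRoot A f m i)) =
      f.map (algebraMap A (SplittingAlgebra A f m)) := by
  refine prod_X_sub_C_eq_of_esymm (by simpa using natDegree_map_le.trans hdeg) fun k hk => ?_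
  rw [Fintype.card_fin] at hk ⊢
  rw [Polynomial.coeff_map]
  rcases k.eq_zero_or_pos with rfl | hk₀
  · rw [← aeval_esymm_eq_multiset_esymm (σ := Fin m) (R := A), esymm_zero, map_one, pow_zero,
      one_mul, Nat.sub_zero, hlead, map_one]
  · rw [esymm_univRoot hk₀ hk, map_mul, map_pow, map_neg, map_one]

variable {B : Type*} [CommRing B]

noncomputable def lift (φ : A →+* B) (y : Fin m → B)
    (hy : ∏ i, (Polynomial.X - Polynomial.C (y i)) = f.map φ) :
    SplittingAlgebra A f m →+* B :=
  Ideal.Quotient.lift _ (eval₂Hom φ y) fun p hp => by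
    refine (Ideal.span_le (I := RingHom.ker (eval₂Hom φ y))).2 ?_ hp
    rintro _ ⟨i, rfl⟩
    have hesymm := esymm_eq_of_prod_X_sub_C hy (k := i + 1) (by simp)
    rw [Fintype.card_fin, Polynomial.coeff_map] at hesymm
    rw [SetLike.mem_coe, RingHom.mem_ker, map_sub, eval₂Hom_C, eval₂Hom_esymm, hesymm, map_mul,
      map_pow, map_neg, map_one, sub_self]

variable {φ : A →+* B} {y : Fin m → B}
  (hy : ∏ i, (Polynomial.X - Polynomial.C (y i)) = f.map φ)

@[simp]
lemma lift_univRoot (i : Fin m) : lift φ y hy (univRoot A f m i) = y i :=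
  eval₂Hom_X' φ y i

@[simp]
lemma lift_algebraMap (a : A) : lift φ y hy (algebraMap A _ a) = φ a :=
  eval₂Hom_C φ y a

lemma ringHom_ext {g₁ g₂ : SplittingAlgebra A f m →+* B}
    (hbase : ∀ a, g₁ (algebraMap A _ a) = g₂ (algebraMap A _ a))
    (hroot : ∀ i, g₁ (univRoot A f m i) = g₂ (univRoot A f m i)) : g₁ = g₂ :=
  Ideal.Quotient.ringHom_ext (MvPolynomial.ringHom_ext hbase hroot)

end

variable {n : ℕ}

/-- The polynomial `f_{n-1}(t) = f(t)/(t - τₙ)` over `A[τₙ]`. -/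
noncomputable abbrev divRoot (f : A[X]) : (AdjoinRoot f)[X] :=
  f.map (algebraMap A (AdjoinRoot f)) /ₘ (Polynomial.X - Polynomial.C (AdjoinRoot.root f))

lemma X_sub_C_root_mul_divRoot :
    (Polynomial.X - Polynomial.C (AdjoinRoot.root f)) * divRoot f =
      f.map (algebraMap A (AdjoinRoot f)) :=
  mul_divByMonic_eq_iff_isRoot.2 (AdjoinRoot.isRoot_root f)

lemma prod_X_sub_C_univRoot_of_monic (hmonic : f.Monic) (hdeg : f.natDegree = n) :
    ∏ i, (Polynomial.X - Polynomial.C (univRoot A f n i)) =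
      f.map (algebraMap A (SplittingAlgebra A f n)) :=
  prod_X_sub_C_univRoot hdeg.le (hdeg ▸ hmonic.coeff_natDegree)

lemma prod_X_sub_C_univRoot_divRoot (hmonic : f.Monic) (hdeg : f.natDegree = n + 1) :
    ∏ i, (Polynomial.X - Polynomial.C (univRoot _ (divRoot f) n i)) =
      (divRoot f).map (algebraMap (AdjoinRoot f) (SplittingAlgebra _ (divRoot f) n)) := by
  have hfB : (f.map (algebraMap A (AdjoinRoot f))).natDegree ≤ n + 1 := hdeg ▸ natDegree_map_le
  refine prod_X_sub_C_univRoot (natDegree_divByMonic_X_sub_C_le hfB _) ?_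
  rw [coeff_divByMonic_X_sub_C_of_natDegree_le hfB, Polynomial.coeff_map, ← hdeg,
    hmonic.coeff_natDegree, map_one]

noncomputable def lastRootHom (hmonic : f.Monic) (hdeg : f.natDegree = n + 1) :
    AdjoinRoot f →+* SplittingAlgebra A f (n + 1) :=
  AdjoinRoot.lift (algebraMap A _) (univRoot A f (n + 1) (Fin.last n)) <| by
    rw [← Polynomial.eval_map, ← prod_X_sub_C_univRoot_of_monic hmonic hdeg]
    exact isRoot_of_prod_X_sub_C_eq rfl _

lemma lastRootHom_comp_algebraMap (hmonic : f.Monic) (hdeg : f.natDegree = n + 1) :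
    (lastRootHom hmonic hdeg).comp (algebraMap A (AdjoinRoot f)) =
      algebraMap A (SplittingAlgebra A f (n + 1)) := by
  rw [AdjoinRoot.algebraMap_eq]
  exact AdjoinRoot.lift_comp_of _

lemma lastRootHom_root (hmonic : f.Monic) (hdeg : f.natDegree = n + 1) :
    lastRootHom hmonic hdeg (AdjoinRoot.root f) = univRoot A f (n + 1) (Fin.last n) :=
  AdjoinRoot.lift_root _

noncomputable def ofDivRoot (hmonic : f.Monic) (hdeg : f.natDegree = n + 1) :
    SplittingAlgebra (AdjoinRoot f) (divRoot f) n →+* SplittingAlgebra A f (n + 1) :=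
  lift (lastRootHom hmonic hdeg) (fun i => univRoot A f (n + 1) i.castSucc) <| by
    refine prod_X_sub_C_castSucc_eq ?_
    rw [prod_X_sub_C_univRoot_of_monic hmonic hdeg, ← lastRootHom_comp_algebraMap hmonic hdeg,
      ← Polynomial.map_map, ← X_sub_C_root_mul_divRoot]
    simp [lastRootHom_root]

noncomputable def toDivRoot (hmonic : f.Monic) (hdeg : f.natDegree = n + 1) :
    SplittingAlgebra A f (n + 1) →+* SplittingAlgebra (AdjoinRoot f) (divRoot f) n :=
  lift (algebraMap A _) (Fin.snoc (univRoot _ (divRoot f) n) (algebraMap _ _ (AdjoinRoot.root f)))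
    <| by
    rw [Fin.prod_univ_castSucc]
    simp only [Fin.snoc_castSucc, Fin.snoc_last]
    rw [prod_X_sub_C_univRoot_divRoot hmonic hdeg, IsScalarTower.algebraMap_eq A (AdjoinRoot f),
      ← Polynomial.map_map, ← X_sub_C_root_mul_divRoot]
    simp [mul_comm]

variable (hmonic : f.Monic) (hdeg : f.natDegree = n + 1)

lemma ofDivRoot_univRoot (i : Fin n) :
    ofDivRoot hmonic hdeg (univRoot _ (divRoot f) n i) = univRoot A f (n + 1) i.castSucc :=
  lift_univRoot _ i

lemma ofDivRoot_algebraMap (b : AdjoinRoot f) :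
    ofDivRoot hmonic hdeg (algebraMap _ _ b) = lastRootHom hmonic hdeg b :=
  lift_algebraMap _ b

lemma toDivRoot_algebraMap (a : A) :
    toDivRoot hmonic hdeg (algebraMap A _ a) = algebraMap A _ a :=
  lift_algebraMap _ a

lemma toDivRoot_univRoot_castSucc (i : Fin n) :
    toDivRoot hmonic hdeg (univRoot A f (n + 1) i.castSucc) = univRoot _ (divRoot f) n i :=
  (lift_univRoot _ _).trans (Fin.snoc_castSucc ..)

lemma toDivRoot_univRoot_last :
    toDivRoot hmonic hdeg (univRoot A f (n + 1) (Fin.last n)) =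
      algebraMap _ _ (AdjoinRoot.root f) :=
  (lift_univRoot _ _).trans (Fin.snoc_last ..)

lemma toDivRoot_comp_lastRootHom :
    (toDivRoot hmonic hdeg).comp (lastRootHom hmonic hdeg) =
      algebraMap (AdjoinRoot f) (SplittingAlgebra _ (divRoot f) n) := by
  refine AdjoinRoot.ringHom_ext ?_ ?_
  · rw [RingHom.comp_assoc, ← AdjoinRoot.algebraMap_eq, lastRootHom_comp_algebraMap,
      ← IsScalarTower.algebraMap_eq]
    exact RingHom.ext (toDivRoot_algebraMap hmonic hdeg)
  · rw [RingHom.comp_apply, lastRootHom_root, toDivRoot_univRoot_last]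

lemma toDivRoot_comp_ofDivRoot :
    (toDivRoot hmonic hdeg).comp (ofDivRoot hmonic hdeg) = RingHom.id _ := by
  refine ringHom_ext (fun b => ?_) (fun i => ?_)
  · rw [RingHom.comp_apply, ofDivRoot_algebraMap, ← RingHom.comp_apply,
      toDivRoot_comp_lastRootHom, RingHom.id_apply]
  · rw [RingHom.comp_apply, ofDivRoot_univRoot, toDivRoot_univRoot_castSucc, RingHom.id_apply]

lemma ofDivRoot_comp_toDivRoot :
    (ofDivRoot hmonic hdeg).comp (toDivRoot hmonic hdeg) = RingHom.id _ := by
  refine ringHom_ext (fun a => ?_) (Fin.lastCases ?_ fun i => ?_)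
  · rw [RingHom.comp_apply, toDivRoot_algebraMap, IsScalarTower.algebraMap_apply A (AdjoinRoot f),
      ofDivRoot_algebraMap, ← RingHom.comp_apply, lastRootHom_comp_algebraMap, RingHom.id_apply]
  · rw [RingHom.comp_apply, toDivRoot_univRoot_last, ofDivRoot_algebraMap, lastRootHom_root,
      RingHom.id_apply]
  · rw [RingHom.comp_apply, toDivRoot_univRoot_castSucc, ofDivRoot_univRoot, RingHom.id_apply]

noncomputable def divRootEquiv :
    SplittingAlgebra (AdjoinRoot f) (divRoot f) n ≃ₐ[A] SplittingAlgebra A f (n + 1) :=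
  AlgEquiv.ofRingEquiv (f := RingEquiv.ofRingHom _ _ (ofDivRoot_comp_toDivRoot hmonic hdeg)
    (toDivRoot_comp_ofDivRoot hmonic hdeg)) fun a => by
    rw [RingEquiv.ofRingHom_apply, IsScalarTower.algebraMap_apply A (AdjoinRoot f),
      ofDivRoot_algebraMap, ← RingHom.comp_apply, lastRootHom_comp_algebraMap]

end SplittingAlgebra

/-- The natural map from the splitting algebra of `f_{n-1}(t) = f(t)/(t - τₙ)` over
`A[τₙ] = A[t]/(f)` to `A_f` is an isomorphism of `A`-algebras. -/
theorem splittingAlgebra_adjoinRoot {A : Type*} [CommRing A]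
    (f : Polynomial A) (n : ℕ) (hmonic : f.Monic) (hdeg : f.natDegree = n + 1) :
    ∃ e : SplittingAlgebra (AdjoinRoot f)
        ((f.map (algebraMap A (AdjoinRoot f))) /ₘ
          (Polynomial.X - Polynomial.C (AdjoinRoot.root f))) n ≃ₐ[A]
        SplittingAlgebra A f (n + 1),
      (∀ i : Fin n,
        e (univRoot (AdjoinRoot f)
            ((f.map (algebraMap A (AdjoinRoot f))) /ₘ
              (Polynomial.X - Polynomial.C (AdjoinRoot.root f))) n i) =
          univRoot A f (n + 1) i.castSucc) ∧
      e (algebraMap (AdjoinRoot f) _ (AdjoinRoot.root f)) =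
        univRoot A f (n + 1) (Fin.last n) :=
  ⟨SplittingAlgebra.divRootEquiv hmonic hdeg, SplittingAlgebra.ofDivRoot_univRoot hmonic hdeg,
    (SplittingAlgebra.ofDivRoot_algebraMap hmonic hdeg _).trans
      (SplittingAlgebra.lastRootHom_root hmonic hdeg)⟩
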